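/- Base change along injections of domains preserves generic field-splitness in both directions: let R ⊆ S be an injective ring map of integral domains containing ℚ, and A a commutative R-algebra finite and free as an R-module. Then A ⊗_R Frac(R) has a field direct summand (as a Frac(R)-algebra) if and only if (A ⊗_R S) ⊗_S Frac(S) has a field direct summand (as a Frac(S)-algebra). -/

import Mathlib

/-!
A commutative ring `C` has a field factor iff some maximal ideal `m` satisfies `Ann m ⊄ m`:
then `m + Ann m = C` and `m * Ann m = 0`, so `C ≅ C ⧸ m × C ⧸ Ann m`.

For `C` finite over a field `K` of characteristic zero and any field extension `L / K`, this
property ascends from `C` to `L ⊗_K C`, because `L ⊗_K (C ⧸ m)` is reduced (`C ⧸ m` is separable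
over `K`), hence a nonzero product of fields. It descends from `L ⊗_K C` to `C` by flatness:
`Ann_{L ⊗ C}(x) = L ⊗ Ann_C(x)`, and since the prime `p = q ∩ C` below a maximal `q` is finitely
generated, `Ann p ⊆ p` forces `Ann x ⊆ p` for some `x ∈ p`, whence `Ann q ⊆ q`.

The theorem is the case `K = Frac R`, `L = Frac S`, `C = Frac R ⊗_R A`, since
`Frac S ⊗_S (S ⊗_R A) ≅ Frac S ⊗_R A ≅ Frac S ⊗_{Frac R} (Frac R ⊗_R A)`.
-/

universe u v w

open scoped TensorProduct

/-- A commutative algebra `C` over a field `κ` has a field direct summand if it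
decomposes as a product `C ≅ K × S` of `κ`-algebras with `K` a field extension of `κ`. -/
def HasFieldSummand (κ : Type u) [Field κ] (C : Type v) [CommRing C] [Algebra κ C] :
    Prop :=
  ∃ (K : Type v) (S : Type v) (_ : Field K) (_ : Algebra κ K) (_ : CommRing S)
    (_ : Algebra κ S), Nonempty (C ≃ₐ[κ] K × S)

def HasFieldPoint (C : Type*) [CommRing C] : Prop :=
  ∃ m : Ideal C, m.IsMaximal ∧ ¬ m.annihilator ≤ m

section

variable {C D : Type*} [CommRing C] [CommRing D]

theorem Ideal.IsMaximal.isCoprime_annihilator {m : Ideal C} (hm : m.IsMaximal)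
    (h : ¬ m.annihilator ≤ m) : IsCoprime m m.annihilator :=
  Ideal.isCoprime_iff_sup_eq.2 (hm.out.2 _ (left_lt_sup.2 h))

theorem Ideal.IsPrime.exists_annihilator_span_singleton_le {p I : Ideal C} (hp : p.IsPrime)
    (hI : I.FG) (h : I.annihilator ≤ p) : ∃ x ∈ I, (Ideal.span {x}).annihilator ≤ p := by
  obtain ⟨t, rfl⟩ := hI
  rw [Ideal.span, Submodule.span_eq_iSup_of_singleton_spans] at h
  simp only [Submodule.annihilator_iSup, Finset.mem_coe, ← Finset.inf_eq_iInf] at h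
  obtain ⟨x, hxt, hx⟩ := hp.inf_le'.1 h
  exact ⟨x, Submodule.subset_span hxt, hx⟩

theorem Ideal.annihilator_span_singleton_algebraMap [Algebra C D] [Module.Flat C D] (x : C) :
    (Ideal.span {algebraMap C D x}).annihilator =
      (Ideal.span {x}).annihilator.map (algebraMap C D) := by
  refine le_antisymm (fun d hd => ?_) (Ideal.map_le_iff_le_comap.2 fun r hr => ?_)
  · obtain ⟨k, a, y, hd, ha⟩ := Module.Flat.isTrivialRelation_of_sum_smul_eq_zero
      (f := fun _ : Unit => x) (x := fun _ => d) <| by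
        simpa [Algebra.smul_def, mul_comm] using
          (Submodule.mem_annihilator_span_singleton _ _).1 hd
    rw [show d = _ from hd ()]
    refine Ideal.sum_mem _ fun j _ => ?_
    rw [Algebra.smul_def]
    refine Ideal.mul_mem_right _ _ (Ideal.mem_map_of_mem _ ?_)
    simpa [Submodule.mem_annihilator_span_singleton, mul_comm] using ha j
  · rw [Ideal.mem_comap, Submodule.mem_annihilator_span_singleton, smul_eq_mul, ← map_mul]
    rw [Submodule.mem_annihilator_span_singleton, smul_eq_mul] at hr
    rw [hr, map_zero]

noncomputable def Ideal.algEquivQuotientProdQuotientAnnihilator (κ : Type*) [CommRing κ]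
    [Algebra κ C] {I : Ideal C} (h : IsCoprime I I.annihilator) :
    C ≃ₐ[κ] (C ⧸ I) × (C ⧸ I.annihilator) :=
  have hbot : I ⊓ I.annihilator = ⊥ := by
    rw [← Ideal.mul_eq_inf_of_isCoprime h, Submodule.mul_annihilator]
  (AlgEquiv.quotientBot κ C).symm.trans <| (Ideal.quotientEquivAlgOfEq κ hbot.symm).trans <|
    AlgEquiv.ofRingEquiv (f := Ideal.quotientInfEquivQuotientProd _ _ h) fun _ => rfl

theorem HasFieldPoint.of_ringEquiv (e : C ≃+* D) (h : HasFieldPoint C) : HasFieldPoint D := by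
  obtain ⟨m, hm, hAm⟩ := h
  obtain ⟨s, hsA, hsm⟩ := SetLike.not_le_iff_exists.1 hAm
  refine ⟨m.comap e.symm, Ideal.comap_isMaximal_of_surjective _ e.symm.surjective,
    SetLike.not_le_iff_exists.2 ⟨e s, Submodule.mem_annihilator.2 fun y hy => ?_, ?_⟩⟩
  · rw [smul_eq_mul, ← e.apply_symm_apply y, ← map_mul, ← smul_eq_mul,
      Submodule.mem_annihilator.1 hsA _ hy, map_zero]
  · simpa [Ideal.mem_comap] using hsm

theorem RingEquiv.hasFieldPoint_iff (e : C ≃+* D) : HasFieldPoint C ↔ HasFieldPoint D :=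
  ⟨.of_ringEquiv e, .of_ringEquiv e.symm⟩

theorem HasFieldPoint.prod (E : Type*) [CommRing E] (h : HasFieldPoint D) :
    HasFieldPoint (D × E) := by
  obtain ⟨m, hm, hAm⟩ := h
  obtain ⟨s, hsA, hsm⟩ := SetLike.not_le_iff_exists.1 hAm
  refine ⟨m.comap (RingHom.fst D E), Ideal.comap_isMaximal_of_surjective _ Prod.fst_surjective,
    SetLike.not_le_iff_exists.2 ⟨(s, 0), Submodule.mem_annihilator.2 fun y hy => ?_, hsm⟩⟩
  ext
  · exact Submodule.mem_annihilator.1 hsA _ hy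
  · simp

theorem HasFieldPoint.of_isSemisimpleRing [IsSemisimpleRing C] [Nontrivial C] :
    HasFieldPoint C := by
  obtain ⟨m, hm⟩ := Ideal.exists_maximal C
  obtain ⟨J, hJ⟩ := exists_isCompl m
  refine ⟨m, hm, fun hAm => hm.ne_top (top_le_iff.1 ?_)⟩
  have hJA : J ≤ m.annihilator := fun j hj => Submodule.mem_annihilator.2 fun x hx => by
    rw [← Submodule.mem_bot C, ← hJ.inf_eq_bot]
    exact ⟨m.smul_mem j hx, J.mul_mem_right x hj⟩
  calc ⊤ = m ⊔ J := hJ.sup_eq_top.symm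
    _ ≤ m := sup_le le_rfl (hJA.trans hAm)

theorem hasFieldSummand_iff_hasFieldPoint {κ : Type u} [Field κ] {C : Type v} [CommRing C]
    [Algebra κ C] : HasFieldSummand κ C ↔ HasFieldPoint C := by
  refine ⟨fun ⟨K, S, _, _, _, _, ⟨e⟩⟩ => ?_, fun ⟨m, hm, hAm⟩ => ?_⟩
  · exact ((HasFieldPoint.of_isSemisimpleRing (C := K)).prod S).of_ringEquiv e.symm.toRingEquiv
  · let := Ideal.Quotient.field m
    exact ⟨C ⧸ m, C ⧸ m.annihilator, inferInstance, inferInstance, inferInstance, inferInstance,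
      ⟨Ideal.algEquivQuotientProdQuotientAnnihilator κ (hm.isCoprime_annihilator hAm)⟩⟩

theorem HasFieldPoint.of_flat [IsArtinianRing C] [Algebra C D] [Module.Flat C D]
    (h : HasFieldPoint D) : HasFieldPoint C := by
  obtain ⟨q, hq, hAq⟩ := h
  set p := q.comap (algebraMap C D)
  have hp : p.IsPrime := Ideal.comap_isPrime _ q
  refine ⟨p, IsArtinianRing.isMaximal_of_isPrime p, fun hAp => hAq ?_⟩
  obtain ⟨x, hxp, hx⟩ := hp.exists_annihilator_span_singleton_le (IsNoetherian.noetherian p) hAp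
  calc q.annihilator ≤ (Ideal.span {algebraMap C D x}).annihilator :=
        Submodule.annihilator_mono ((Ideal.span_singleton_le_iff_mem q).2 hxp)
    _ = (Ideal.span {x}).annihilator.map (algebraMap C D) :=
        Ideal.annihilator_span_singleton_algebraMap x
    _ ≤ q := (Ideal.map_mono hx).trans Ideal.map_comap_le

end

section BaseChange

variable (K L : Type*) [Field K] [Field L] [Algebra K L]

theorem hasFieldPoint_tensorProduct_of_isSeparable (F : Type*) [Field F] [Algebra K F]
    [FiniteDimensional K F] [Algebra.IsSeparable K F] : HasFieldPoint (L ⊗[K] F) := by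
  have := Algebra.FormallyEtale.of_isSeparable K F
  have := Algebra.FormallyUnramified.isReduced_of_field L (L ⊗[K] F)
  have := IsArtinianRing.of_finite L (L ⊗[K] F)
  have := IsArtinianRing.isSemisimpleRing_of_isReduced (L ⊗[K] F)
  exact .of_isSemisimpleRing

variable [CharZero K] (C : Type*) [CommRing C] [Algebra K C] [Module.Finite K C]

theorem HasFieldPoint.baseChange (h : HasFieldPoint C) : HasFieldPoint (L ⊗[K] C) := by
  obtain ⟨m, hm, hAm⟩ := h
  let := Ideal.Quotient.field m
  let e := Ideal.algEquivQuotientProdQuotientAnnihilator K (hm.isCoprime_annihilator hAm)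
  exact ((hasFieldPoint_tensorProduct_of_isSeparable K L (C ⧸ m)).prod _).of_ringEquiv
    ((Algebra.TensorProduct.congr AlgEquiv.refl e).trans
      (Algebra.TensorProduct.prodRight K L L _ _)).symm.toRingEquiv

theorem hasFieldPoint_tensorProduct_iff : HasFieldPoint (L ⊗[K] C) ↔ HasFieldPoint C := by
  have := IsArtinianRing.of_finite K C
  refine ⟨fun h => ?_, .baseChange K L C⟩
  exact (h.of_ringEquiv (Algebra.TensorProduct.comm K L C).toRingEquiv).of_flat (D := C ⊗[K] L)

end BaseChange

theorem hasFieldSummand_iff_of_injective_domains_general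
    (R : Type u) [CommRing R] [IsDomain R] [Algebra ℚ R]
    (S : Type w) [CommRing S] [IsDomain S] [Algebra R S]
    (hinj : Function.Injective (algebraMap R S))
    (A : Type v) [CommRing A] [Algebra R A] [Module.Finite R A] :
    HasFieldSummand (FractionRing R) ((FractionRing R) ⊗[R] A) ↔
      HasFieldSummand (FractionRing S) ((FractionRing S) ⊗[S] (S ⊗[R] A)) := by
  have : CharZero (FractionRing R) := algebraRat.charZero _
  have : FaithfulSMul R (FractionRing S) := (faithfulSMul_iff_algebraMap_injective _ _).2 <| by
    rw [IsScalarTower.algebraMap_eq R S (FractionRing S), RingHom.coe_comp]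
    exact (IsFractionRing.injective S (FractionRing S)).comp hinj
  let := FractionRing.liftAlgebra R (FractionRing S)
  rw [hasFieldSummand_iff_hasFieldPoint, hasFieldSummand_iff_hasFieldPoint,
    ← hasFieldPoint_tensorProduct_iff (FractionRing R) (FractionRing S),
    (Algebra.TensorProduct.cancelBaseChange R (FractionRing R) (FractionRing S) (FractionRing S)
      A).toRingEquiv.hasFieldPoint_iff,
    (Algebra.TensorProduct.cancelBaseChange R S (FractionRing S) (FractionRing S)
      A).toRingEquiv.hasFieldPoint_iff]

/-- Base change along injections of integral domains containing `ℚ` preserves generic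
field-splitness in both directions: for `A` a finite free commutative `R`-algebra and
`R → S` injective, `A ⊗_R Frac(R)` has a field direct summand iff
`(A ⊗_R S) ⊗_S Frac(S)` does. -/
theorem hasFieldSummand_iff_of_injective_domains
    (R : Type u) [CommRing R] [IsDomain R] [Algebra ℚ R]
    (S : Type w) [CommRing S] [IsDomain S] [Algebra ℚ S] [Algebra R S]
    (hinj : Function.Injective (algebraMap R S))
    (A : Type v) [CommRing A] [Algebra R A] [Module.Finite R A] [Module.Free R A] :
    HasFieldSummand (FractionRing R) ((FractionRing R) ⊗[R] A) ↔
      HasFieldSummand (FractionRing S) ((FractionRing S) ⊗[S] (S ⊗[R] A)) :=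
  hasFieldSummand_iff_of_injective_domains_general R S hinj A
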